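/- arXiv:math/0702639 — 5 statements merged into one kernel-verified Lean document; each statement's English description precedes it below -/
import Mathlib

section
/- The riff-shuffle probability mass function sums to 1: for 0 < p < 1, q = 1 - p, and integer m ≥ 1, the sum over k from 0 to m-1 of C(m+k-1, k)·(p^m·q^k + q^m·p^k) equals 1. -/
/-!
`raceWin x y a b` is the probability that a player winning each round with probability `x`
collects `a + 1` wins before the opponent, who wins with probability `y`, collects `b + 1`:
the `k`-th term is the chance that the decisive win comes after exactly `k` losses. One of the
two players must win the race, and conditioning on the first round gives Pascal's recurrence
`raceWin (a+1) (b+1) = x * raceWin a (b+1) + y * raceWin (a+1) b`, so the identity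
`raceWin x y a b + raceWin y x b a = 1` follows by induction and holds formally whenever
`x + y = 1`. The riff-shuffle mass function is the case `a = b = m - 1`.
-/

open Finset

section Race

variable {R : Type*} [CommRing R]

def raceWin (x y : R) (a b : ℕ) : R :=
  ∑ k ∈ range (b + 1), ((a + k).choose k : R) * x ^ (a + 1) * y ^ k

theorem raceWin_zero_left (x y : R) (b : ℕ) :
    raceWin x y 0 b = x * ∑ k ∈ range (b + 1), y ^ k := by
  simp only [raceWin, zero_add, Nat.choose_self, Nat.cast_one, one_mul, pow_one, mul_sum]

theorem raceWin_zero_right (x y : R) (a : ℕ) : raceWin x y a 0 = x ^ (a + 1) := by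
  simp [raceWin]

theorem raceWin_succ_succ (x y : R) (a b : ℕ) :
    raceWin x y (a + 1) (b + 1) = x * raceWin x y a (b + 1) + y * raceWin x y (a + 1) b := by
  have pascal : ∀ k, ((a + 1 + (k + 1)).choose (k + 1) : R)
      = ((a + 1 + k).choose k : R) + ((a + (k + 1)).choose (k + 1) : R) := fun k => by
    rw [show a + 1 + (k + 1) = a + 1 + k + 1 by omega, Nat.choose_succ_succ,
      show a + 1 + k = a + (k + 1) by omega, Nat.cast_add]
  simp only [raceWin, mul_sum]
  rw [sum_range_succ' _ (b + 1), sum_range_succ' (fun k => x * _) (b + 1)]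
  simp only [pascal, add_mul, sum_add_distrib]
  have hx : ∀ k, x * (((a + (k + 1)).choose (k + 1) : R) * x ^ (a + 1) * y ^ (k + 1))
      = ((a + (k + 1)).choose (k + 1) : R) * x ^ (a + 1 + 1) * y ^ (k + 1) := fun k => by ring
  have hy : ∀ k, y * (((a + 1 + k).choose k : R) * x ^ (a + 1 + 1) * y ^ k)
      = ((a + 1 + k).choose k : R) * x ^ (a + 1 + 1) * y ^ (k + 1) := fun k => by ring
  simp only [hx, hy, Nat.choose_zero_right, Nat.cast_one, pow_zero]
  ring

theorem raceWin_zero_left_add_raceWin_swap {x y : R} (hxy : x + y = 1) (b : ℕ) :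
    raceWin x y 0 b + raceWin y x b 0 = 1 := by
  obtain rfl : x = 1 - y := eq_sub_of_add_eq hxy
  rw [raceWin_zero_left, raceWin_zero_right]
  linear_combination -(geom_sum_mul y (b + 1))

theorem raceWin_add_raceWin_swap {x y : R} (hxy : x + y = 1) (a b : ℕ) :
    raceWin x y a b + raceWin y x b a = 1 := by
  induction a generalizing b with
  | zero => exact raceWin_zero_left_add_raceWin_swap hxy b
  | succ a iha =>
    induction b with
    | zero => rw [add_comm]; exact raceWin_zero_left_add_raceWin_swap (add_comm x y ▸ hxy) _
    | succ b ihb =>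
      rw [raceWin_succ_succ, raceWin_succ_succ]
      linear_combination x * iha (b + 1) + y * ihb + hxy

end Race

theorem riff_shuffle_sums_to_one_general (p q : ℝ)
    (hq : q = 1 - p) (m : ℕ) (hm : 1 ≤ m) :
    ∑ k ∈ Finset.range m,
      ((Nat.choose (m + k - 1) k : ℝ) * (p ^ m * q ^ k + q ^ m * p ^ k)) = 1 := by
  obtain ⟨a, rfl⟩ : ∃ a, m = a + 1 := ⟨m - 1, by omega⟩
  calc ∑ k ∈ range (a + 1),
        ((Nat.choose (a + 1 + k - 1) k : ℝ) * (p ^ (a + 1) * q ^ k + q ^ (a + 1) * p ^ k))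
      = raceWin p q a a + raceWin q p a a := by
        rw [raceWin, raceWin, ← sum_add_distrib]
        refine sum_congr rfl fun k _ => ?_
        rw [show a + 1 + k - 1 = a + k by omega]
        ring
    _ = 1 := raceWin_add_raceWin_swap (by rw [hq]; ring) a a

theorem riff_shuffle_sums_to_one (p q : ℝ) (hp0 : 0 < p) (hp1 : p < 1)
    (hq : q = 1 - p) (m : ℕ) (hm : 1 ≤ m) :
    ∑ k ∈ Finset.range m,
      ((Nat.choose (m + k - 1) k : ℝ) * (p ^ m * q ^ k + q ^ m * p ^ k)) = 1 :=
  riff_shuffle_sums_to_one_general p q hq m hm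
end

section
/- For 0 < p < 1 with p ≠ 1/2, let q = 1-p and f_k = C(m+k-1,k)·(p^m q^k + q^m p^k), where f_m denotes the same formula evaluated at k = m. Then there exists M such that for all m ≥ M the riff-shuffle probability mass function fails log-concavity at k = m-1, that is, f_{m-1}^2 < f_{m-2}·f_m. -/
theorem riff_shuffle_not_log_concave (p q : ℝ) (hp0 : 0 < p) (hp1 : p < 1)
    (hp : p ≠ 1/2) (hq : q = 1 - p) :
    ∃ M : ℕ, 2 ≤ M ∧ ∀ m : ℕ, M ≤ m →
      ((Nat.choose (m + (m-1) - 1) (m-1) : ℝ) * (p ^ m * q ^ (m-1) + q ^ m * p ^ (m-1))) ^ 2 <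
      ((Nat.choose (m + (m-2) - 1) (m-2) : ℝ) * (p ^ m * q ^ (m-2) + q ^ m * p ^ (m-2))) *
      ((Nat.choose (m + m - 1) m : ℝ) * (p ^ m * q ^ m + q ^ m * p ^ m)) := by
  have hq0 : 0 < q := by rw [hq]; linarith
  have hpq1 : p + q = 1 := by rw [hq]; ring
  have hpqne : p - q ≠ 0 := by
    rw [hq]; intro h; apply hp; linarith
  have hd : 0 < (p - q)^2 := by positivity
  obtain ⟨N, hN⟩ := exists_nat_gt (1 / (p-q)^2)
  refine ⟨N + 2, by omega, fun m hm => ?_⟩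
  obtain ⟨n, rfl⟩ : ∃ n, m = n + 2 := ⟨m - 2, by omega⟩
  have hn : (1:ℝ) < (p-q)^2 * n := by
    have hNn : (N:ℝ) ≤ n := by exact_mod_cast (by omega : N ≤ n)
    have h1 : 1 / (p-q)^2 < (n:ℝ) := lt_of_lt_of_le hN hNn
    rw [div_lt_iff₀ hd] at h1
    linarith [h1]
  have e1 : n + 2 - 1 = n + 1 := by omega
  have e2 : n + 2 - 2 = n := by omega
  have e3 : n + 2 + (n + 1) - 1 = 2*n + 2 := by omega
  have e4 : n + 2 + n - 1 = 2*n + 1 := by omega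
  have e5 : n + 2 + (n + 2) - 1 = 2*n + 3 := by omega
  rw [e1, e2, e3, e4, e5]
  -- binomial identities
  have hc1 : 2 * Nat.choose (2*n+1) n = Nat.choose (2*n+2) (n+1) := by
    have hsym : Nat.choose (2*n+1) (n+1) = Nat.choose (2*n+1) n := by
      rw [← Nat.choose_symm (by omega : n+1 ≤ 2*n+1)]
      congr 1
      omega
    have hps : Nat.choose (2*n+2) (n+1) = Nat.choose (2*n+1) n + Nat.choose (2*n+1) (n+1) :=
      Nat.choose_succ_succ (2*n+1) n
    omega
  have hc2 : (n+2) * Nat.choose (2*n+3) (n+2) = (2*n+3) * Nat.choose (2*n+2) (n+1) := by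
    have h := Nat.add_one_mul_choose_eq (2*n+2) (n+1)
    rw [(by omega : 2*n+2+1 = 2*n+3), (by omega : n+1+1 = n+2)] at h
    exact (Nat.mul_comm _ _).trans h.symm
  set cb : ℝ := (Nat.choose (2*n+2) (n+1) : ℝ) with hcbdef
  set c1r : ℝ := (Nat.choose (2*n+1) n : ℝ) with hc1def
  set c2r : ℝ := (Nat.choose (2*n+3) (n+2) : ℝ) with hc2def
  have rc1 : 2 * c1r = cb := by rw [hc1def, hcbdef]; exact_mod_cast hc1
  have rc2 : ((n:ℝ)+2) * c2r = (2*(n:ℝ)+3) * cb := by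
    rw [hc2def, hcbdef]; exact_mod_cast hc2
  have hcb : 0 < cb := by
    rw [hcbdef]
    exact_mod_cast Nat.choose_pos (by omega : n+1 ≤ 2*n+2)
  have ht : 0 < p * q := mul_pos hp0 hq0
  set t : ℝ := p * q with htdef
  -- key inequality
  have hkey : (n:ℝ) + 2 < (2*(n:ℝ)+3) * (p^2 + q^2) := by
    have hn0 : (0:ℝ) ≤ n := Nat.cast_nonneg n
    have hs : p^2 + q^2 = (1 + (p-q)^2)/2 := by linear_combination ((p+q+1)/2) * hpq1
    nlinarith [hn, hd, hn0, hs]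
  have hlt : cb^2 < 2*c1r*c2r*(p^2+q^2) := by
    have h : cb^2 * ((n:ℝ)+2) < (2*c1r*c2r*(p^2+q^2)) * ((n:ℝ)+2) := by
      have h1 : cb^2 * ((n:ℝ)+2) < cb^2 * ((2*(n:ℝ)+3) * (p^2+q^2)) :=
        mul_lt_mul_of_pos_left hkey (by positivity)
      have h2 : cb^2 * ((2*(n:ℝ)+3) * (p^2+q^2)) = (2*c1r*c2r*(p^2+q^2)) * ((n:ℝ)+2) := by
        linear_combination (-(cb*(p^2+q^2))) * rc2 + (-(c2r*(p^2+q^2)*((n:ℝ)+2))) * rc1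
      linarith [h1, h2.symm.le]
    have hn2 : (0:ℝ) < (n:ℝ) + 2 := by positivity
    exact lt_of_mul_lt_mul_right h hn2.le
  have hTpos : 0 < t^n * t^(n+2) := by positivity
  have key2 : cb^2 * (t^n * t^(n+2)) < (c1r * (t^n * (p^2+q^2))) * (c2r * (2*t^(n+2))) := by
    have := mul_lt_mul_of_pos_right hlt hTpos
    calc cb^2 * (t^n * t^(n+2)) < (2*c1r*c2r*(p^2+q^2)) * (t^n * t^(n+2)) := this
      _ = (c1r * (t^n * (p^2+q^2))) * (c2r * (2*t^(n+2))) := by ring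
  calc (cb * (p ^ (n+2) * q ^ (n+1) + q ^ (n+2) * p ^ (n+1))) ^ 2
      = cb^2 * (t^n * t^(n+2)) := by
        rw [htdef]
        linear_combination (cb^2 * (p*q)^(2*n+2) * (p+q+1)) * hpq1
    _ < (c1r * (t^n * (p^2+q^2))) * (c2r * (2*t^(n+2))) := key2
    _ = (c1r * (p ^ (n+2) * q ^ n + q ^ (n+2) * p ^ n)) *
        (c2r * (p ^ (n+2) * q ^ (n+2) + q ^ (n+2) * p ^ (n+2))) := by rw [htdef]; ring
end

section
/- Fix 0 < p < 1/2 and q = 1-p, and for integer m ≥ 2 define h(x) = p^m·q^x + q^m·p^x for real x. Then the second derivative of x ↦ h(x)/h(x+1) equals (q-p)·(log p - log q)^2 · p^{m+x}·q^{m+x}·(p^m·q^{x+1} - p^{x+1}·q^m) / (p^m·q^{x+1} + p^{x+1}·q^m)^3. -/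
theorem riff_shuffle_second_derivative (p q : ℝ) (hp0 : 0 < p) (hp : p < 1/2)
    (hq : q = 1 - p) (m : ℕ) (hm : 2 ≤ m) (x : ℝ) :
    deriv (deriv (fun y : ℝ =>
        (p ^ m * q ^ y + q ^ m * p ^ y) / (p ^ m * q ^ (y + 1) + q ^ m * p ^ (y + 1)))) x =
      (q - p) * (Real.log p - Real.log q) ^ 2 * p ^ ((m : ℝ) + x) * q ^ ((m : ℝ) + x) *
        (p ^ m * q ^ (x + 1) - p ^ (x + 1) * q ^ m) /
        (p ^ m * q ^ (x + 1) + p ^ (x + 1) * q ^ m) ^ 3 := by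
  have hq0 : 0 < q := by rw [hq]; linarith
  set L := Real.log q with hL
  set M := Real.log p with hM
  set C := (q - p) * (M - L) with hC
  have hpm : (0:ℝ) < p ^ m := pow_pos hp0 m
  have hqm : (0:ℝ) < q ^ m := pow_pos hq0 m
  have hD : ∀ y : ℝ, (0:ℝ) < p ^ m * q ^ (y + 1) + q ^ m * p ^ (y + 1) := fun y =>
    add_pos (mul_pos hpm (Real.rpow_pos_of_pos hq0 _))
      (mul_pos hqm (Real.rpow_pos_of_pos hp0 _))
  have hDq : ∀ y : ℝ, HasDerivAt (fun y : ℝ => q ^ (y + 1)) (q ^ (y + 1) * L) y := by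
    intro y
    have := (Real.hasStrictDerivAt_const_rpow hq0 (y + 1)).hasDerivAt.comp y
      ((hasDerivAt_id y).add_const 1)
    simpa [Function.comp_def] using this
  have hDp : ∀ y : ℝ, HasDerivAt (fun y : ℝ => p ^ (y + 1)) (p ^ (y + 1) * M) y := by
    intro y
    have := (Real.hasStrictDerivAt_const_rpow hp0 (y + 1)).hasDerivAt.comp y
      ((hasDerivAt_id y).add_const 1)
    simpa [Function.comp_def] using this
  have hu : ∀ y : ℝ, HasDerivAt (fun y : ℝ => q ^ y) (q ^ y * L) y := fun y =>
    (Real.hasStrictDerivAt_const_rpow hq0 y).hasDerivAt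
  have hv : ∀ y : ℝ, HasDerivAt (fun y : ℝ => p ^ y) (p ^ y * M) y := fun y =>
    (Real.hasStrictDerivAt_const_rpow hp0 y).hasDerivAt
  -- derivative of denominator
  have hDd : ∀ y : ℝ, HasDerivAt (fun y : ℝ => p ^ m * q ^ (y + 1) + q ^ m * p ^ (y + 1))
      (p ^ m * (q ^ (y + 1) * L) + q ^ m * (p ^ (y + 1) * M)) y := fun y =>
    ((hDq y).const_mul _).add ((hDp y).const_mul _)
  have hNd : ∀ y : ℝ, HasDerivAt (fun y : ℝ => p ^ m * q ^ y + q ^ m * p ^ y)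
      (p ^ m * (q ^ y * L) + q ^ m * (p ^ y * M)) y := fun y =>
    ((hu y).const_mul _).add ((hv y).const_mul _)
  -- first derivative
  have hderiv1 : (deriv (fun y : ℝ =>
        (p ^ m * q ^ y + q ^ m * p ^ y) / (p ^ m * q ^ (y + 1) + q ^ m * p ^ (y + 1))))
      = fun y : ℝ => C * ((p ^ m * q ^ y) * (q ^ m * p ^ y)) /
        (p ^ m * q ^ (y + 1) + q ^ m * p ^ (y + 1)) ^ 2 := by
    funext y
    have h := ((hNd y).div (hDd y) (hD y).ne')
    simp only [Pi.div_def] at h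
    rw [h.deriv]
    have e1 : q ^ (y + 1) = q ^ y * q := by
      rw [Real.rpow_add hq0, Real.rpow_one]
    have e2 : p ^ (y + 1) = p ^ y * p := by
      rw [Real.rpow_add hp0, Real.rpow_one]
    have hDy := (hD y).ne'
    rw [e1, e2] at hDy ⊢
    field_simp
    ring
  rw [hderiv1]
  -- second derivative
  have hnum : HasDerivAt (fun y : ℝ => C * ((p ^ m * q ^ y) * (q ^ m * p ^ y)))
      (C * ((p ^ m * (q ^ x * L)) * (q ^ m * p ^ x) +
        (p ^ m * q ^ x) * (q ^ m * (p ^ x * M)))) x := by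
    exact ((((hu x).const_mul (p ^ m)).mul ((hv x).const_mul (q ^ m)))).const_mul C
  have hden : HasDerivAt (fun y : ℝ => (p ^ m * q ^ (y + 1) + q ^ m * p ^ (y + 1)) ^ 2)
      (2 * (p ^ m * q ^ (x + 1) + q ^ m * p ^ (x + 1)) ^ 1 *
        (p ^ m * (q ^ (x + 1) * L) + q ^ m * (p ^ (x + 1) * M))) x := (hDd x).pow 2
  have h2 := hnum.div hden (by positivity)
  simp only [Pi.div_def] at h2
  rw [h2.deriv]
  have e1 : q ^ (x + 1) = q ^ x * q := by rw [Real.rpow_add hq0, Real.rpow_one]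
  have e2 : p ^ (x + 1) = p ^ x * p := by rw [Real.rpow_add hp0, Real.rpow_one]
  have e3 : p ^ ((m : ℝ) + x) = p ^ m * p ^ x := by
    rw [Real.rpow_add hp0, Real.rpow_natCast]
  have e4 : q ^ ((m : ℝ) + x) = q ^ m * q ^ x := by
    rw [Real.rpow_add hq0, Real.rpow_natCast]
  have hDx := (hD x).ne'
  rw [e1, e2] at hDx ⊢
  rw [e3, e4]
  field_simp
  ring
end

section
/- Fix 0 < p < 1/2, q = 1-p, and integer m ≥ 2, and define h(x) = p^m·q^x + q^m·p^x. Then the function x ↦ h(x)/h(x+1) is concave on the interval [0, m-2]. -/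
open Real Set

lemma sigmoid_convex (a c : ℝ) (ha : 0 < a) (hc : 0 < c) :
    ConvexOn ℝ (Set.Iic (Real.log a / c))
      (fun x => (1 + a * Real.exp (-(c * x)))⁻¹) := by
  set g1 : ℝ → ℝ := fun x => a * c * Real.exp (-(c*x)) / (1 + a * Real.exp (-(c*x)))^2 with hg1
  set g2 : ℝ → ℝ := fun x =>
    a * c^2 * Real.exp (-(c*x)) * (a * Real.exp (-(c*x)) - 1) / (1 + a * Real.exp (-(c*x)))^3
  have hden : ∀ x : ℝ, 0 < 1 + a * Real.exp (-(c*x)) := fun x => by positivity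
  have hd1 : ∀ x : ℝ, HasDerivAt (fun x => (1 + a * Real.exp (-(c * x)))⁻¹) (g1 x) x := by
    intro x
    have h1 : HasDerivAt (fun x : ℝ => -(c*x)) (-c) x := by
      have := ((hasDerivAt_id x).const_mul c).neg
      simp only [mul_one, id] at this
      exact this
    have h2 : HasDerivAt (fun x : ℝ => 1 + a * Real.exp (-(c*x)))
        (a * (Real.exp (-(c*x)) * (-c))) x := by
      exact (((Real.hasDerivAt_exp _).comp x h1).const_mul a).const_add 1
    have := h2.inv (ne_of_gt (hden x))
    refine this.congr_deriv ?_
    rw [hg1]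
    beta_reduce
    rw [div_eq_div_iff (by positivity) (by positivity)]
    ring
  have hd2 : ∀ x : ℝ, HasDerivAt g1 (g2 x) x := by
    intro x
    have h1 : HasDerivAt (fun x : ℝ => -(c*x)) (-c) x := by
      have := ((hasDerivAt_id x).const_mul c).neg
      simp only [mul_one, id] at this
      exact this
    have he : HasDerivAt (fun x : ℝ => Real.exp (-(c*x))) (Real.exp (-(c*x)) * (-c)) x :=
      (Real.hasDerivAt_exp _).comp x h1
    have hN : HasDerivAt (fun x : ℝ => a * c * Real.exp (-(c*x)))
        (a * c * (Real.exp (-(c*x)) * (-c))) x := he.const_mul _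
    have hD : HasDerivAt (fun x : ℝ => (1 + a * Real.exp (-(c*x)))^2)
        ((2 : ℕ) * (1 + a * Real.exp (-(c*x)))^1 * (a * (Real.exp (-(c*x)) * (-c)))) x := by
      exact ((he.const_mul a).const_add 1).pow 2
    have := hN.div hD (by positivity)
    refine this.congr_deriv ?_
    show _ / _ = _
    rw [div_eq_div_iff (by positivity) (by positivity)]
    push_cast
    ring
  refine convexOn_of_hasDerivWithinAt2_nonneg (convex_Iic _) ?_
      (f' := g1) (f'' := g2) (fun x _ => (hd1 x).hasDerivWithinAt)
      (fun x _ => (hd2 x).hasDerivWithinAt) ?_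
  · refine Continuous.continuousOn (Continuous.inv₀ ?_ fun x => (hden x).ne')
    continuity
  · intro x hx
    rw [interior_Iic] at hx
    have hx' : x * c < Real.log a := by
      have := (lt_div_iff₀ hc).mp hx
      linarith
    have h1 : 1 ≤ a * Real.exp (-(c*x)) := by
      rw [← Real.exp_log ha, ← Real.exp_add]
      exact Real.one_le_exp (by linarith)
    apply div_nonneg
    · have : (0:ℝ) ≤ a * Real.exp (-(c*x)) - 1 := by linarith
      positivity
    · positivity

theorem riff_shuffle_ratio_concave (p q : ℝ) (hp0 : 0 < p) (hp : p < 1/2)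
    (hq : q = 1 - p) (m : ℕ) (hm : 2 ≤ m) :
    ConcaveOn ℝ (Set.Icc (0 : ℝ) ((m : ℝ) - 2))
      (fun x => (p ^ m * q ^ x + q ^ m * p ^ x) /
        (p ^ m * q ^ (x + 1) + q ^ m * p ^ (x + 1))) := by
  have hq0 : 0 < q := by rw [hq]; linarith
  have hpq : p < q := by rw [hq]; linarith
  set c : ℝ := Real.log (q / p) with hc
  have hc0 : 0 < c := Real.log_pos (by rw [lt_div_iff₀ hp0]; linarith)
  set a : ℝ := Real.exp (((m : ℝ) - 1) * c) with ha
  have ha0 : 0 < a := Real.exp_pos _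
  have hlog : Real.log a / c = (m : ℝ) - 1 := by
    rw [ha, Real.log_exp, mul_div_assoc, div_self hc0.ne', mul_one]
  set g : ℝ → ℝ := fun x => (1 + a * Real.exp (-(c * x)))⁻¹ with hg
  set k : ℝ := (q - p) / (p * q) with hk
  have hk0 : 0 ≤ k := by
    apply div_nonneg (by linarith) (by positivity)
  have hconv : ConvexOn ℝ (Set.Iic ((m : ℝ) - 1)) g := by
    rw [← hlog]; exact sigmoid_convex a c ha0 hc0
  have hconc : ConcaveOn ℝ (Set.Icc (0 : ℝ) ((m : ℝ) - 2))
      (fun x => -(k • g) x + 1/p) := by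
    refine ConcaveOn.add_const ?_ (1/p)
    refine ConcaveOn.subset ((hconv.smul hk0).neg) (fun x hx => ?_) (convex_Icc _ _)
    exact le_trans hx.2 (by linarith)
  have heq : (fun x : ℝ => (p ^ m * q ^ x + q ^ m * p ^ x) /
        (p ^ m * q ^ (x + 1) + q ^ m * p ^ (x + 1)))
      = (fun x : ℝ => -(k • g) x + 1/p) := by
    funext x
    have hA : (0:ℝ) < p ^ m * q ^ x := by positivity
    have hB : (0:ℝ) < q ^ m * p ^ x := by positivity
    have hqx1 : q ^ (x + 1) = q ^ x * q := Real.rpow_add_one hq0.ne' x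
    have hpx1 : p ^ (x + 1) = p ^ x * p := Real.rpow_add_one hp0.ne' x
    have hv : a * Real.exp (-(c * x)) = (p * (q ^ m * p ^ x)) / (q * (p ^ m * q ^ x)) := by
      rw [ha, ← Real.exp_add]
      have h1 : ((m : ℝ) - 1) * c + -(c * x) = Real.log (q/p) * ((m : ℝ) - 1 - x) := by
        rw [hc]; ring
      rw [h1, ← Real.rpow_def_of_pos (by positivity)]
      have h2 : (m : ℝ) - 1 - x = (m : ℝ) - (x + 1) := by ring
      rw [h2, Real.rpow_sub (by positivity), Real.rpow_natCast, div_pow,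
        Real.div_rpow hq0.le hp0.le, hqx1, hpx1]
      have hpx : (0:ℝ) < p ^ x := Real.rpow_pos_of_pos hp0 x
      have hqx : (0:ℝ) < q ^ x := Real.rpow_pos_of_pos hq0 x
      field_simp
    show _ = -(k * g x) + 1/p
    rw [hg]
    simp only []
    rw [hv, hqx1, hpx1, hk]
    have hpx : (0:ℝ) < p ^ x := Real.rpow_pos_of_pos hp0 x
    have hqx : (0:ℝ) < q ^ x := Real.rpow_pos_of_pos hq0 x
    have hden : (0:ℝ) < p ^ m * (q ^ x * q) + q ^ m * (p ^ x * p) := by positivity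
    have h3 : (0:ℝ) < 1 + p * (q ^ m * p ^ x) / (q * (p ^ m * q ^ x)) := by positivity
    field_simp
    ring
  rw [heq]
  exact hconc
end

section
/- Fix 0 < p < 1/2, q = 1-p, integer m ≥ 2, h(x) = p^m·q^x + q^m·p^x, and g(x) = h(x)/h(x+1) - (x+m)/(x+1). Then g is concave on [0, m-2]. -/
open Real Set

-- model function concavity lemma
lemma aux_concave (p q L : ℝ) (hp0 : 0 < p) (hq0 : 0 < q) (hpq : p < q)
    (hL0 : 0 < L) (hLval : L = Real.log (q / p)) (m : ℕ) (hm : 2 ≤ m) :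
    ConcaveOn ℝ (Set.Icc (0 : ℝ) ((m : ℝ) - 2))
      (fun y => 1/p - (q - p)/p * (q + p * Real.exp (L * (m:ℝ) - L * y))⁻¹
        - 1 - ((m:ℝ) - 1) * (y + 1)⁻¹) := by
  have hwpos : ∀ y : ℝ, 0 < q + p * Real.exp (L * (m:ℝ) - L * y) := fun y => by positivity
  refine concaveOn_of_hasDerivWithinAt2_nonpos (f' := fun y =>
      -((q - p) * L * Real.exp (L * (m:ℝ) - L * y)) /
        (q + p * Real.exp (L * (m:ℝ) - L * y)) ^ 2 + ((m:ℝ) - 1) / (y + 1) ^ 2)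
    (f'' := fun y =>
      (q - p) * L ^ 2 * Real.exp (L * (m:ℝ) - L * y) *
        (q - p * Real.exp (L * (m:ℝ) - L * y)) /
        (q + p * Real.exp (L * (m:ℝ) - L * y)) ^ 3 - 2 * ((m:ℝ) - 1) / (y + 1) ^ 3)
    (convex_Icc _ _) ?_ ?_ ?_ ?_
  · -- continuity
    have h1 : Continuous fun y : ℝ => 1/p - (q - p)/p *
        (q + p * Real.exp (L * (m:ℝ) - L * y))⁻¹ - 1 := by
      refine (continuous_const.sub (continuous_const.mul ?_)).sub continuous_const
      exact (by fun_prop : Continuous fun y : ℝ => q + p * Real.exp (L * (m:ℝ) - L * y)).inv₀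
        fun y => (hwpos y).ne'
    refine (h1.continuousOn).sub (ContinuousOn.mul continuousOn_const ?_)
    exact ContinuousOn.inv₀ (by fun_prop) fun y hy => by
      have := hy.1; intro h; linarith [hy.1]
  · -- first derivative
    rw [interior_Icc]
    intro x hx
    have hx1 : x + 1 ≠ 0 := by have := hx.1; intro h; linarith
    have hlin : HasDerivAt (fun y : ℝ => L * (m:ℝ) - L * y) (-(L * 1)) x :=
      (((hasDerivAt_id x).const_mul L)).const_sub (L * (m:ℝ))
    have hE := hlin.exp
    have hw : HasDerivAt (fun y : ℝ => q + p * Real.exp (L * (m:ℝ) - L * y))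
        (p * (Real.exp (L * (m:ℝ) - L * x) * -(L * 1))) x := (hE.const_mul p).const_add q
    have hinv := hw.inv (hwpos x).ne'
    have ht1 := ((hinv.const_mul ((q - p)/p)).const_sub (1/p)).sub_const 1
    have hx1d : HasDerivAt (fun y : ℝ => (y + 1)⁻¹) (-1 / (x + 1) ^ 2) x := by
      simpa [Pi.inv_def] using ((hasDerivAt_id x).add_const 1).inv hx1
    have ht2 := hx1d.const_mul ((m:ℝ) - 1)
    have := ht1.sub ht2
    refine (HasDerivAt.hasDerivWithinAt ?_)
    convert this using 1
    · rfl
    field_simp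
    ring
  · -- second derivative
    rw [interior_Icc]
    intro x hx
    have hx1 : x + 1 ≠ 0 := by have := hx.1; intro h; linarith
    have hlin : HasDerivAt (fun y : ℝ => L * (m:ℝ) - L * y) (-(L * 1)) x :=
      (((hasDerivAt_id x).const_mul L)).const_sub (L * (m:ℝ))
    have hE := hlin.exp
    have hw : HasDerivAt (fun y : ℝ => q + p * Real.exp (L * (m:ℝ) - L * y))
        (p * (Real.exp (L * (m:ℝ) - L * x) * -(L * 1))) x := (hE.const_mul p).const_add q
    have hnum : HasDerivAt (fun y : ℝ =>
        -((q - p) * L * Real.exp (L * (m:ℝ) - L * y)))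
        (-((q - p) * L * (Real.exp (L * (m:ℝ) - L * x) * -(L * 1)))) x := by
      have := hE.const_mul ((q - p) * L)
      simpa [neg_mul, mul_assoc, Pi.neg_def] using this.neg
    have hden : HasDerivAt (fun y : ℝ => (q + p * Real.exp (L * (m:ℝ) - L * y)) ^ 2)
        (2 * (q + p * Real.exp (L * (m:ℝ) - L * x)) ^ 1 *
          (p * (Real.exp (L * (m:ℝ) - L * x) * -(L * 1)))) x := hw.pow 2
    have hdiv := hnum.div hden (by positivity)
    have hden2 : HasDerivAt (fun y : ℝ => (y + 1) ^ 2) (2 * (x + 1) ^ 1 * 1) x :=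
      ((hasDerivAt_id x).add_const 1).pow 2
    have ht2 := (hasDerivAt_const x ((m:ℝ) - 1)).div hden2 (by positivity)
    have := hdiv.add ht2
    refine (HasDerivAt.hasDerivWithinAt ?_)
    convert this using 1
    · rfl
    have hwne := (hwpos x).ne'
    field_simp
    ring
  · -- sign
    rw [interior_Icc]
    intro x hx
    set E := Real.exp (L * (m:ℝ) - L * x) with hEdef
    have hqp1 : 1 < q / p := (one_lt_div hp0).2 hpq
    have hEge : q / p ≤ E := by
      rw [hEdef, ← Real.exp_log (by positivity : (0:ℝ) < q / p), ← hLval]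
      apply Real.exp_le_exp.2
      nlinarith [hx.2, hL0]
    have hE0 : 0 < E := hEdef ▸ Real.exp_pos _
    have hw3 : 0 < q + p * E := by positivity
    have hpE : q ≤ p * E := by
      rw [div_le_iff₀ hp0] at hEge
      linarith
    have h1 : (q - p) * L ^ 2 * E * (q - p * E) / (q + p * E) ^ 3 ≤ 0 := by
      apply div_nonpos_of_nonpos_of_nonneg
      · apply mul_nonpos_of_nonneg_of_nonpos
        · exact mul_nonneg (mul_nonneg (by linarith) (sq_nonneg L)) hE0.le
        · linarith
      · exact pow_nonneg hw3.le 3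
    have h2 : (0:ℝ) ≤ 2 * ((m:ℝ) - 1) / (x + 1) ^ 3 := by
      have hm1 : (1:ℝ) ≤ (m:ℝ) := by exact_mod_cast Nat.one_le_of_lt hm
      have hx1 : (0:ℝ) < x + 1 := by linarith [hx.1]
      exact div_nonneg (by linarith) (pow_nonneg hx1.le 3)
    linarith

theorem riff_shuffle_g_concave (p q : ℝ) (hp0 : 0 < p) (hp : p < 1/2)
    (hq : q = 1 - p) (m : ℕ) (hm : 2 ≤ m) :
    ConcaveOn ℝ (Set.Icc (0 : ℝ) ((m : ℝ) - 2))
      (fun x => (p ^ m * q ^ x + q ^ m * p ^ x) /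
        (p ^ m * q ^ (x + 1) + q ^ m * p ^ (x + 1)) - (x + m) / (x + 1)) := by
  have hq0 : 0 < q := by rw [hq]; linarith
  have hpq : p < q := by rw [hq]; linarith
  have hqp1 : 1 < q / p := (one_lt_div hp0).2 hpq
  set L : ℝ := Real.log (q / p) with hL
  have hL0 : 0 < L := Real.log_pos hqp1
  refine (aux_concave p q L hp0 hq0 hpq hL0 hL m hm).congr ?_
  intro x hx
  have hx0 : (0:ℝ) ≤ x := hx.1
  have hx1 : x + 1 ≠ 0 := by intro h; linarith
  have hA : (0:ℝ) < p ^ m * q ^ x := by positivity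
  have hB : (0:ℝ) < q ^ m * p ^ x := by positivity
  have hExp : Real.exp (L * (m:ℝ) - L * x) = (q ^ m * p ^ x) / (p ^ m * q ^ x) := by
    rw [hL, Real.log_div hq0.ne' hp0.ne']
    rw [show (Real.log q - Real.log p) * (m:ℝ) - (Real.log q - Real.log p) * x =
        (Real.log q * (m:ℝ) + Real.log p * x) - (Real.log p * (m:ℝ) + Real.log q * x) by ring]
    rw [Real.exp_sub, Real.exp_add, Real.exp_add,
      ← Real.rpow_def_of_pos hq0, ← Real.rpow_def_of_pos hp0,
      ← Real.rpow_def_of_pos hq0, ← Real.rpow_def_of_pos hp0,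
      Real.rpow_natCast, Real.rpow_natCast]
  have hqx : q ^ (x + 1) = q ^ x * q := by
    rw [Real.rpow_add hq0, Real.rpow_one]
  have hpx : p ^ (x + 1) = p ^ x * p := by
    rw [Real.rpow_add hp0, Real.rpow_one]
  simp only
  rw [hqx, hpx, hExp]
  have hden : (0:ℝ) < p ^ m * (q ^ x * q) + q ^ m * (p ^ x * p) := by positivity
  have hden2 : (0:ℝ) < q + p * ((q ^ m * p ^ x) / (p ^ m * q ^ x)) := by positivity
  field_simp
  ring
end
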